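/- Let f ∈ C_c^∞(0,τ;H) and u₀ ∈ H, and let u ∈ W¹₂(0,τ;V′) ∩ L₂(0,τ;V) be the solution, given by Lions's theorem, of u′(t) + 𝒜(t)u(t) = f(t) in V′ with u(0) = u₀. Then for almost every t ∈ (0,τ) the following identity holds in V′: u(t) = ∫₀ᵗ e^{−(t−s)𝒜(t)}(𝒜(t) − 𝒜(s))u(s) ds + ∫₀ᵗ e^{−(t−s)𝒜(t)} f(s) ds + e^{−t𝒜(t)}u₀. -/

import Mathlib

/- Acquistapace–Terreni representation formula (Haak–Ouhabaz, Lemma 2.3): if `u` is the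
Lions solution of `u' + 𝒜(·)u = f` in `V'`, `u(0) = u₀ ∈ H`, with
`f ∈ C_c^∞(0,τ;H)`, then for a.e. `t ∈ (0,τ)` one has, in `V'`,
`u(t) = ∫₀ᵗ e^{-(t-s)𝒜(t)} (𝒜(t) - 𝒜(s)) u(s) ds + ∫₀ᵗ e^{-(t-s)𝒜(t)} f(s) ds + e^{-t𝒜(t)} u₀`.

`V'` is realised as `V →L[ℂ] ℂ`; `dualEmb J : H → V'` is the canonical embedding; `𝒜(t)w`
is `a t w ∈ V'`.  The bounded holomorphic semigroup `e^{-s𝒜(t)}` is given as data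
`TV t : ℝ → V' →L[ℂ] V'` characterised by `IsSemigroupVdual`: semigroup law, strong
continuity on `[0,∞)`, uniform boundedness, and the generator identity
`d/ds e^{-s𝒜(t)}(w) = - e^{-s𝒜(t)} 𝒜(t) w` for `w ∈ V`.  The Lions solution is given by
`u : ℝ → V` (its `L₂(0,τ;V)` version), its `V'`-derivative `u'` and its continuous
`V'`-valued representative `U ∈ W¹₂(0,τ;V')`. -/

open MeasureTheory Set
open scoped InnerProductSpace ENNReal

noncomputable section

variable {V H : Type*}
  [NormedAddCommGroup V] [InnerProductSpace ℂ V] [CompleteSpace V]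
  [NormedAddCommGroup H] [InnerProductSpace ℂ H] [CompleteSpace H]

/-- The canonical embedding `H ↪ V' = (V →L[ℂ] ℂ)`, `h ↦ ⟪h, J ·⟫`. -/
def dualEmb (J : V →L[ℂ] H) (h : H) : V →L[ℂ] ℂ :=
  (innerSL ℂ h).comp J

/-- `T = (e^{-s𝒜})_{s ≥ 0}` is the bounded `C₀`-semigroup on `V' = (V →L[ℂ] ℂ)` generated
by `-𝒜`, where `𝒜 w = B w ∈ V'` for `w ∈ V` (domain `V ↪ V'`). -/
def IsSemigroupVdual (J : V →L[ℂ] H) (B : V →L⋆[ℂ] V →L[ℂ] ℂ)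
    (T : ℝ → (V →L[ℂ] ℂ) →L[ℂ] (V →L[ℂ] ℂ)) : Prop :=
  T 0 = ContinuousLinearMap.id ℂ (V →L[ℂ] ℂ) ∧
  (∀ s₁ s₂ : ℝ, 0 ≤ s₁ → 0 ≤ s₂ → T (s₁ + s₂) = (T s₁).comp (T s₂)) ∧
  (∀ φ : V →L[ℂ] ℂ, ContinuousOn (fun s => T s φ) (Ici 0)) ∧
  (∃ C : ℝ, ∀ s ∈ Ici (0:ℝ), ‖T s‖ ≤ C) ∧
  (∀ w : V, ∀ s ∈ Ici (0:ℝ),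
    HasDerivWithinAt (fun r => T r (dualEmb J (J w))) (-(T s (B w))) (Ici 0) s)


/-!
Fix `t`. Formally `d/ds [e^{-(t-s)𝒜(t)} u(s)] = e^{-(t-s)𝒜(t)} (𝒜(t) u(s) + u'(s))`, and
integrating over `[0, t]` gives `u(t) = ∫₀ᵗ e^{-(t-s)𝒜(t)} (𝒜(t) u(s) + u'(s)) ds + e^{-t𝒜(t)} u₀`;
substituting `u' = f - 𝒜(s) u` yields the formula. As `u` is only in `L₂(0,τ;V)`, the product
rule is applied instead to the Steklov averages `h⁻¹ ∫ₛ^{s+h} u`, which are continuous with values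
in `V` and whose images in `V'` are differentiable. This gives the identity on `[0, t - h]` with
`u` and `u'` replaced by their Steklov averages, and one lets `h → 0⁺`: the semigroup is uniformly
bounded and strongly continuous, and Steklov averages converge in `L¹` (approximate by a
compactly supported continuous function, for which they converge uniformly).
-/

open Filter Topology

section OperatorFamily

variable {X Y : Type*} [NormedAddCommGroup X] [NormedSpace ℝ X]
  [NormedAddCommGroup Y] [NormedSpace ℝ Y]

theorem continuousOn_clm_apply_of_norm_le {α : Type*} [TopologicalSpace α]
    {T : α → X →L[ℝ] Y} {S : Set α} {C : ℝ}
    (hTc : ∀ x, ContinuousOn (fun r => T r x) S) (hTC : ∀ r ∈ S, ‖T r‖ ≤ C) :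
    ContinuousOn (fun p : α × X => T p.1 p.2) (S ×ˢ univ) := by
  rintro ⟨r₀, x₀⟩ ⟨hr₀, -⟩
  have hsmall : Tendsto (fun p : α × X => T p.1 (p.2 - x₀)) (𝓝[S ×ˢ univ] (r₀, x₀)) (𝓝 0) := by
    refine squeeze_zero_norm' ?_ (a := fun p => C * ‖p.2 - x₀‖) ?_
    · filter_upwards [self_mem_nhdsWithin] with p hp
      exact (T p.1).le_of_opNorm_le (hTC p.1 hp.1) _
    · have : Continuous fun p : α × X => C * ‖p.2 - x₀‖ := by fun_prop
      simpa using (this.tendsto (r₀, x₀)).mono_left nhdsWithin_le_nhds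
  have hfixed : Tendsto (fun p : α × X => T p.1 x₀) (𝓝[S ×ˢ univ] (r₀, x₀)) (𝓝 (T r₀ x₀)) :=
    (hTc x₀ r₀ hr₀).tendsto.comp
      (continuousWithinAt_fst.tendsto_nhdsWithin fun p hp => hp.1)
  have hsum := hsmall.add hfixed
  simp only [map_sub, sub_add_cancel, zero_add] at hsum
  exact hsum

variable {T : ℝ → X →L[ℝ] Y} {C t : ℝ}

theorem continuousOn_clm_apply_sub (hTc : ∀ x, ContinuousOn (fun r => T r x) (Ici 0))
    (hTC : ∀ r ∈ Ici (0 : ℝ), ‖T r‖ ≤ C) {φ : ℝ → X} {S : Set ℝ} (hφ : ContinuousOn φ S)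
    (hS : S ⊆ Iic t) : ContinuousOn (fun s => T (t - s) (φ s)) S :=
  (continuousOn_clm_apply_of_norm_le hTc hTC).comp
    ((continuousOn_const.sub continuousOn_id).prodMk hφ)
    fun s hs => ⟨show (0 : ℝ) ≤ t - s from sub_nonneg.2 (hS hs), trivial⟩

theorem intervalIntegrable_clm_apply_sub (hTc : ∀ x, ContinuousOn (fun r => T r x) (Ici 0))
    (hTC : ∀ r ∈ Ici (0 : ℝ), ‖T r‖ ≤ C) {ψ : ℝ → X} {a : ℝ} (hat : a ≤ t)
    (hψ : IntervalIntegrable ψ volume a t) :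
    IntervalIntegrable (fun s => T (t - s) (ψ s)) volume a t := by
  rw [intervalIntegrable_iff_integrableOn_Ioc_of_le hat] at hψ ⊢
  -- clamping the time at `0` makes `(r, x) ↦ T r x` continuous on all of `ℝ × X`
  have hclamped : Continuous fun p : ℝ × X => T (max p.1 0) p.2 :=
    (continuousOn_clm_apply_of_norm_le hTc hTC).comp_continuous
      ((continuous_fst.max continuous_const).prodMk continuous_snd)
      fun p => ⟨show (0 : ℝ) ≤ max p.1 0 from le_max_right _ _, trivial⟩
  refine Integrable.mono' (hψ.norm.const_mul C) ?_ ?_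
  · refine (hclamped.comp_aestronglyMeasurable
      ((continuous_sub_left t).aestronglyMeasurable.prodMk hψ.1)).congr ?_
    filter_upwards [ae_restrict_mem measurableSet_Ioc] with s hs
    simp [max_eq_left (sub_nonneg.2 hs.2)]
  · filter_upwards [ae_restrict_mem measurableSet_Ioc] with s hs
    exact (T (t - s)).le_of_opNorm_le (hTC _ (sub_nonneg.2 hs.2)) _

theorem HasDerivAt.clm_apply_of_norm_le {T : ℝ → X →L[ℝ] Y} {Z : ℝ → X} {s₀ : ℝ} {z : X} {y : Y}
    (hTz : ContinuousAt (fun s => T s z) s₀) (hTC : ∀ᶠ s in 𝓝 s₀, ‖T s‖ ≤ C)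
    (hZ : HasDerivAt Z z s₀) (hTZ : HasDerivAt (fun s => T s (Z s₀)) y s₀) :
    HasDerivAt (fun s => T s (Z s)) (T s₀ z + y) s₀ := by
  rw [hasDerivAt_iff_isLittleO] at hZ hTZ ⊢
  have hfirst : (fun s => T s (Z s - Z s₀ - (s - s₀) • z)) =o[𝓝 s₀] fun s => s - s₀ := by
    refine (Asymptotics.IsBigO.of_bound C ?_).trans_isLittleO hZ
    filter_upwards [hTC] with s hs
    exact (T s).le_of_opNorm_le hs _
  have hsecond : (fun s => (s - s₀) • (T s z - T s₀ z)) =o[𝓝 s₀] fun s => s - s₀ := by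
    have hlim : (fun s => T s z - T s₀ z) =o[𝓝 s₀] fun _ => (1 : ℝ) :=
      (Asymptotics.isLittleO_one_iff ℝ).2 (by simpa using hTz.tendsto.sub_const (T s₀ z))
    simpa using (Asymptotics.isBigO_refl (fun s => s - s₀) _).smul_isLittleO hlim
  refine ((hfirst.add hsecond).add hTZ).congr_left fun s => ?_
  simp only [map_sub, map_smul, smul_sub, smul_add]
  abel

end OperatorFamily

theorem IntervalIntegrable.mono_add_of_mem_Icc {F : Type*} [NormedAddCommGroup F] {f : ℝ → F}
    {a b h s : ℝ} (hf : IntervalIntegrable f volume a b) (hh : 0 ≤ h) (hs : s ∈ Icc a (b - h)) :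
    IntervalIntegrable f volume s (s + h) :=
  hf.mono_set (uIcc_subset_uIcc (mem_uIcc.2 (Or.inl ⟨hs.1, by linarith [hs.2]⟩))
    (mem_uIcc.2 (Or.inl ⟨by linarith [hs.1], by linarith [hs.2]⟩)))

section Steklov

variable {F G : Type*} [NormedAddCommGroup F] [NormedSpace ℝ F]
  [NormedAddCommGroup G] [NormedSpace ℝ G]

def steklov (ψ : ℝ → F) (h s : ℝ) : F := h⁻¹ • ∫ r in s..s + h, ψ r

variable {ψ φ : ℝ → F} {a b h s : ℝ}

theorem steklov_sub (hψ : IntervalIntegrable ψ volume s (s + h))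
    (hφ : IntervalIntegrable φ volume s (s + h)) :
    steklov (fun r => ψ r - φ r) h s = steklov ψ h s - steklov φ h s := by
  simp only [steklov, intervalIntegral.integral_sub hψ hφ, smul_sub]

theorem steklov_add (hψ : IntervalIntegrable ψ volume s (s + h))
    (hφ : IntervalIntegrable φ volume s (s + h)) :
    steklov (fun r => ψ r + φ r) h s = steklov ψ h s + steklov φ h s := by
  simp only [steklov, intervalIntegral.integral_add hψ hφ, smul_add]

theorem steklov_sub_const [CompleteSpace F] (hh : h ≠ 0)
    (hψ : IntervalIntegrable ψ volume s (s + h)) (c : F) :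
    steklov (fun r => ψ r - c) h s = steklov ψ h s - c := by
  rw [steklov_sub hψ intervalIntegrable_const]
  congr 1
  rw [steklov, intervalIntegral.integral_const, add_sub_cancel_left, smul_smul,
    inv_mul_cancel₀ hh, one_smul]

theorem ContinuousLinearMap.map_steklov [CompleteSpace F] [CompleteSpace G] (L : F →L[ℝ] G)
    (hψ : IntervalIntegrable ψ volume s (s + h)) :
    L (steklov ψ h s) = steklov (fun r => L (ψ r)) h s := by
  simp only [steklov, map_smul, L.intervalIntegral_comp_comm hψ]

theorem steklov_eq_primitive_sub (hψ : IntervalIntegrable ψ volume a b) (hh : 0 ≤ h)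
    (has : a ≤ s) (hsb : s + h ≤ b) :
    steklov ψ h s = h⁻¹ • ((∫ r in a..s + h, ψ r) - ∫ r in a..s, ψ r) := by
  have hmem : ∀ x ∈ Icc s (s + h), x ∈ uIcc a b := fun x hx =>
    mem_uIcc.2 (Or.inl ⟨has.trans hx.1, hx.2.trans hsb⟩)
  rw [steklov, intervalIntegral.integral_interval_sub_left
    (hψ.mono_set (uIcc_subset_uIcc left_mem_uIcc (hmem _ ⟨by linarith, le_rfl⟩)))
    (hψ.mono_set (uIcc_subset_uIcc left_mem_uIcc (hmem _ ⟨le_rfl, by linarith⟩)))]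

theorem norm_steklov_le (hh : 0 ≤ h) : ‖steklov ψ h s‖ ≤ steklov (fun r => ‖ψ r‖) h s := by
  rw [steklov, steklov, norm_smul, Real.norm_of_nonneg (inv_nonneg.2 hh), smul_eq_mul]
  gcongr
  exact intervalIntegral.norm_integral_le_integral_norm (by linarith)

theorem norm_steklov_sub_le [CompleteSpace F] (hh : 0 < h)
    (hψ : IntervalIntegrable ψ volume s (s + h)) {ε : ℝ}
    (hε : ∀ r ∈ Ioc s (s + h), ‖ψ r - ψ s‖ ≤ ε) : ‖steklov ψ h s - ψ s‖ ≤ ε := by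
  have hbound := intervalIntegral.norm_integral_le_of_norm_le_const
    (fun r hr => hε r ((uIoc_of_le (by linarith : s ≤ s + h)) ▸ hr))
  rw [add_sub_cancel_left, abs_of_pos hh] at hbound
  rw [← steklov_sub_const hh.ne' hψ, steklov, norm_smul, Real.norm_of_nonneg (inv_nonneg.2 hh.le)]
  calc h⁻¹ * ‖∫ r in s..s + h, ψ r - ψ s‖ ≤ h⁻¹ * (ε * h) := by gcongr
    _ = ε := by field_simp

theorem norm_steklov_sub_le_add (hh : 0 ≤ h) (hψ : IntervalIntegrable ψ volume s (s + h))
    (hφ : IntervalIntegrable φ volume s (s + h)) :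
    ‖steklov ψ h s - ψ s‖
      ≤ steklov (fun r => ‖ψ r - φ r‖) h s + ‖steklov φ h s - φ s‖ + ‖ψ s - φ s‖ := by
  calc ‖steklov ψ h s - ψ s‖
      = ‖steklov (fun r => ψ r - φ r) h s + (steklov φ h s - φ s) - (ψ s - φ s)‖ := by
        rw [steklov_sub hψ hφ]; abel_nf
    _ ≤ ‖steklov (fun r => ψ r - φ r) h s‖ + ‖steklov φ h s - φ s‖ + ‖ψ s - φ s‖ :=
        (norm_sub_le _ _).trans (by gcongr; exact norm_add_le _ _)
    _ ≤ _ := by gcongr; exact norm_steklov_le hh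

theorem continuousOn_steklov (hψ : IntervalIntegrable ψ volume a b) (hh : 0 ≤ h) :
    ContinuousOn (steklov ψ h) (Icc a (b - h)) := by
  have hP := intervalIntegral.continuousOn_primitive_interval' hψ left_mem_uIcc
  have hmem : ∀ x ∈ Icc a (b - h), x ∈ uIcc a b ∧ x + h ∈ uIcc a b := fun x hx =>
    ⟨mem_uIcc.2 (Or.inl ⟨hx.1, by linarith [hx.2]⟩),
      mem_uIcc.2 (Or.inl ⟨by linarith [hx.1], by linarith [hx.2]⟩)⟩
  refine (((hP.comp (continuousOn_id.add continuousOn_const) fun x hx => (hmem x hx).2).sub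
    (hP.mono fun x hx => (hmem x hx).1)).const_smul h⁻¹).congr fun x hx => ?_
  exact steklov_eq_primitive_sub hψ hh hx.1 (by linarith [hx.2])

theorem hasDerivAt_steklov [CompleteSpace F] (hψ : ContinuousOn ψ (Icc a b)) (hh : 0 ≤ h)
    (hs : s ∈ Ioo a (b - h)) : HasDerivAt (steklov ψ h) (h⁻¹ • (ψ (s + h) - ψ s)) s := by
  have hab : a ≤ b := by linarith [hs.1, hs.2]
  have hint : IntervalIntegrable ψ volume a b := hψ.intervalIntegrable_of_Icc hab
  have hprim : ∀ x ∈ Ioo a b, HasDerivAt (fun y => ∫ r in a..y, ψ r) (ψ x) x := fun x hx =>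
    intervalIntegral.integral_hasDerivAt_right
      ((hψ.mono (Icc_subset_Icc le_rfl hx.2.le)).intervalIntegrable_of_Icc hx.1.le)
      ((hψ.mono Ioo_subset_Icc_self).stronglyMeasurableAtFilter isOpen_Ioo x hx)
      (hψ.continuousAt (Icc_mem_nhds hx.1 hx.2))
  have hderiv := (((hprim (s + h) ⟨by linarith [hs.1], by linarith [hs.2]⟩).comp_add_const s h).sub
    (hprim s ⟨hs.1, by linarith [hs.2]⟩)).const_smul h⁻¹
  refine hderiv.congr_of_eventuallyEq ?_
  filter_upwards [Ioo_mem_nhds hs.1 hs.2] with x hx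
  exact steklov_eq_primitive_sub hint hh hx.1.le (by linarith [hx.2])

theorem tendsto_steklov_right [CompleteSpace F] (hab : a < b) (hψ : ContinuousOn ψ (Icc a b)) :
    Tendsto (fun h => steklov ψ h a) (𝓝[>] 0) (𝓝 (ψ a)) := by
  rw [Metric.tendsto_nhds]
  intro ε hε
  obtain ⟨δ, hδ, hψδ⟩ :=
    Metric.continuousWithinAt_iff.1 (hψ a (left_mem_Icc.2 hab.le)) (ε / 2) (half_pos hε)
  filter_upwards [Ioo_mem_nhdsGT (lt_min hδ (sub_pos.2 hab))] with h ⟨hh, hhδ⟩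
  have hhδ' : h < δ := hhδ.trans_le (min_le_left _ _)
  have hhb : a + h ≤ b := by linarith [hhδ.trans_le (min_le_right _ _)]
  rw [dist_eq_norm]
  refine (norm_steklov_sub_le hh ((hψ.mono (Icc_subset_Icc le_rfl hhb)).intervalIntegrable_of_Icc
    (by linarith)) fun r hr => ?_).trans_lt (half_lt_self hε)
  rw [← dist_eq_norm]
  refine (hψδ ⟨hr.1.le, hr.2.trans hhb⟩ ?_).le
  rw [Real.dist_eq, abs_of_pos (by linarith [hr.1])]
  linarith [hr.2]

theorem tendsto_steklov_left [CompleteSpace F] (hab : a < b) (hψ : ContinuousOn ψ (Icc a b)) :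
    Tendsto (fun h => steklov ψ h (b - h)) (𝓝[>] 0) (𝓝 (ψ b)) := by
  have hreflect : ContinuousOn (fun r => ψ (a + b - r)) (Icc a b) :=
    hψ.comp (continuousOn_const.sub continuousOn_id) fun r hr =>
      ⟨by linarith [hr.2], by linarith [hr.1]⟩
  convert tendsto_steklov_right hab hreflect using 2 with h
  · simp only [steklov, sub_add_cancel]
    rw [intervalIntegral.integral_comp_sub_left (fun r => ψ r) (a + b)]
    ring_nf
  · ring_nf

theorem integral_sub_comp_add_le_of_monotoneOn {Φ : ℝ → ℝ} (hΦc : ContinuousOn Φ (Icc a b))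
    (hΦm : MonotoneOn Φ (Icc a b)) (hh : 0 ≤ h) (hhab : h ≤ b - a) :
    ∫ s in a..b - h, (Φ (s + h) - Φ s) ≤ h * (Φ b - Φ a) := by
  have hii : ∀ {x y}, a ≤ x → x ≤ b → a ≤ y → y ≤ b → IntervalIntegrable Φ volume x y :=
    fun hx hx' hy hy' => (hΦc.mono (uIcc_subset_Icc ⟨hx, hx'⟩ ⟨hy, hy'⟩)).intervalIntegrable
  have hA := hii le_rfl (by linarith) (by linarith) (by linarith : a + h ≤ b)
  have hB := hii (by linarith : a ≤ a + h) (by linarith) (by linarith) le_rfl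
  have hA' := hii le_rfl (by linarith) (by linarith) (by linarith : b - h ≤ b)
  have hB' := hii (by linarith : a ≤ b - h) (by linarith) (by linarith) le_rfl
  have hshift : ∫ s in a..b - h, (Φ (s + h) - Φ s)
      = (∫ s in b - h..b, Φ s) - ∫ s in a..a + h, Φ s := by
    rw [intervalIntegral.integral_sub (by simpa using hB.comp_add_right h) hA',
      intervalIntegral.integral_comp_add_right Φ h, sub_add_cancel]
    linarith [intervalIntegral.integral_add_adjacent_intervals hA hB,
      intervalIntegral.integral_add_adjacent_intervals hA' hB']
  have hup : ∫ s in b - h..b, Φ s ≤ h * Φ b := by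
    simpa using intervalIntegral.integral_mono_on (by linarith) hB' intervalIntegrable_const
      fun x hx => hΦm ⟨by linarith [hx.1], hx.2⟩ ⟨by linarith, le_rfl⟩ hx.2
  have hlow : h * Φ a ≤ ∫ s in a..a + h, Φ s := by
    simpa using intervalIntegral.integral_mono_on (by linarith) intervalIntegrable_const hA
      fun x hx => hΦm ⟨le_rfl, by linarith⟩ ⟨hx.1, by linarith [hx.2]⟩ hx.1
  linarith

theorem integral_steklov_le {φ : ℝ → ℝ} (hφ0 : 0 ≤ φ) (hφ : IntervalIntegrable φ volume a b)
    (hh : 0 < h) (hhab : h ≤ b - a) :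
    ∫ s in a..b - h, steklov φ h s ≤ ∫ s in a..b, φ s := by
  set Φ : ℝ → ℝ := fun x => ∫ r in a..x, φ r
  have hab : a ≤ b := by linarith
  have hΦc : ContinuousOn Φ (Icc a b) := by
    simpa only [uIcc_of_le hab] using
      intervalIntegral.continuousOn_primitive_interval' hφ left_mem_uIcc
  have hΦm : MonotoneOn Φ (Icc a b) := fun x hx y hy hxy =>
    intervalIntegral.integral_mono_interval le_rfl hx.1 hxy (Eventually.of_forall fun r => hφ0 r)
      (hφ.mono_set (uIcc_subset_uIcc left_mem_uIcc (mem_uIcc.2 (Or.inl hy))))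
  calc ∫ s in a..b - h, steklov φ h s = h⁻¹ * ∫ s in a..b - h, (Φ (s + h) - Φ s) := by
        rw [← intervalIntegral.integral_const_mul]
        refine intervalIntegral.integral_congr fun s hs => ?_
        rw [uIcc_of_le (by linarith)] at hs
        exact steklov_eq_primitive_sub hφ hh.le hs.1 (by linarith [hs.2])
    _ ≤ h⁻¹ * (h * (Φ b - Φ a)) := by
        gcongr
        exact integral_sub_comp_add_le_of_monotoneOn hΦc hΦm hh.le hhab
    _ = ∫ s in a..b, φ s := by
        simp [Φ, inv_mul_cancel_left₀ hh.ne']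

theorem integral_norm_steklov_sub_le [CompleteSpace F] (hψ : IntervalIntegrable ψ volume a b)
    (hφ : Continuous φ) (hh : 0 < h) (hhab : h ≤ b - a) {η : ℝ}
    (hη : ∀ s r, s < r → r ≤ s + h → ‖φ r - φ s‖ ≤ η) :
    ∫ s in a..b - h, ‖steklov ψ h s - ψ s‖ ≤ 2 * (∫ s in a..b, ‖ψ s - φ s‖) + (b - a) * η := by
  set d : ℝ → ℝ := fun r => ‖ψ r - φ r‖
  have hd : IntervalIntegrable d volume a b := (hψ.sub (hφ.intervalIntegrable a b)).norm
  have hsub : uIcc a (b - h) ⊆ uIcc a b :=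
    uIcc_subset_uIcc left_mem_uIcc (mem_uIcc.2 (Or.inl ⟨by linarith, by linarith⟩))
  have hsd : IntervalIntegrable (steklov d h) volume a (b - h) :=
    (continuousOn_steklov hd hh.le).intervalIntegrable_of_Icc (by linarith)
  have hdd : IntervalIntegrable d volume a (b - h) := hd.mono_set hsub
  have hη0 : 0 ≤ η := (norm_nonneg _).trans (hη 0 h hh (zero_add h).ge)
  have hpoint : ∀ s ∈ Icc a (b - h), ‖steklov ψ h s - ψ s‖ ≤ steklov d h s + η + d s :=
    fun s hs =>
      (norm_steklov_sub_le_add hh.le (hψ.mono_add_of_mem_Icc hh.le hs)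
        (hφ.intervalIntegrable _ _)).trans
        (add_le_add (add_le_add le_rfl (norm_steklov_sub_le hh (hφ.intervalIntegrable _ _)
          fun r hr => hη s r hr.1 hr.2)) le_rfl)
  calc ∫ s in a..b - h, ‖steklov ψ h s - ψ s‖
      ≤ ∫ s in a..b - h, (steklov d h s + η + d s) :=
        intervalIntegral.integral_mono_on (by linarith)
          (((continuousOn_steklov hψ hh.le).intervalIntegrable_of_Icc (by linarith)).sub
            (hψ.mono_set hsub)).norm ((hsd.add intervalIntegrable_const).add hdd) hpoint
    _ = (∫ s in a..b - h, steklov d h s) + (b - h - a) * η + ∫ s in a..b - h, d s := by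
        rw [intervalIntegral.integral_add (hsd.add intervalIntegrable_const) hdd,
          intervalIntegral.integral_add hsd intervalIntegrable_const,
          intervalIntegral.integral_const, smul_eq_mul]
    _ ≤ (∫ s in a..b, d s) + (b - a) * η + ∫ s in a..b, d s := by
        gcongr
        · exact integral_steklov_le (fun r => norm_nonneg _) hd hh hhab
        · linarith
        · exact intervalIntegral.integral_mono_interval le_rfl (by linarith) (by linarith)
            (Eventually.of_forall fun r => norm_nonneg _) hd
    _ = 2 * (∫ s in a..b, ‖ψ s - φ s‖) + (b - a) * η := by ring

theorem tendsto_integral_norm_steklov_sub [CompleteSpace F] (hab : a < b)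
    (hψ : IntervalIntegrable ψ volume a b) :
    Tendsto (fun h => ∫ s in a..b - h, ‖steklov ψ h s - ψ s‖) (𝓝[>] 0) (𝓝 0) := by
  rw [Metric.tendsto_nhds]
  intro ε hε
  have hba : 0 < b - a := sub_pos.2 hab
  obtain ⟨φ, hφ_supp, hφ_close, hφ_cont, -⟩ :=
    ((intervalIntegrable_iff_integrableOn_Ioc_of_le hab.le).1
      hψ).exists_hasCompactSupport_integral_sub_le (show 0 < ε / 4 by positivity)
  obtain ⟨δ, hδ, hφδ⟩ := Metric.uniformContinuous_iff.1
    (hφ_supp.uniformContinuous_of_continuous hφ_cont) (ε / 4 / (b - a)) (by positivity)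
  rw [← intervalIntegral.integral_of_le hab.le] at hφ_close
  filter_upwards [Ioo_mem_nhdsGT (lt_min hδ hba)] with h ⟨hh, hhmin⟩
  have hhδ : h < δ := hhmin.trans_le (min_le_left _ _)
  have hhba : h < b - a := hhmin.trans_le (min_le_right _ _)
  have hbound := integral_norm_steklov_sub_le hψ hφ_cont hh hhba.le (η := ε / 4 / (b - a))
    fun s r hsr hrs => by
      rw [← dist_eq_norm]
      refine (hφδ ?_).le
      rw [Real.dist_eq, abs_of_pos (by linarith)]
      linarith
  rw [mul_div_cancel₀ _ hba.ne'] at hbound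
  rw [Real.dist_eq, sub_zero, abs_of_nonneg (intervalIntegral.integral_nonneg (by linarith)
    fun _ _ => norm_nonneg _)]
  linarith

end Steklov

theorem continuousOn_of_forall_eq_add_integral {X : Type*} [NormedAddCommGroup X]
    [NormedSpace ℝ X] {U u' : ℝ → X} {x₀ : X} {a b : ℝ} (hab : a ≤ b)
    (hu' : IntervalIntegrable u' volume a b) (hU : ∀ s ∈ Icc a b, U s = x₀ + ∫ r in a..s, u' r) :
    ContinuousOn U (Icc a b) := by
  refine (continuousOn_const.add ?_).congr hU
  simpa only [uIcc_of_le hab] using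
    intervalIntegral.continuousOn_primitive_interval' hu' left_mem_uIcc

section VariationOfConstants

variable {E X : Type*} [NormedAddCommGroup E] [NormedSpace ℝ E] [CompleteSpace E]
  [NormedAddCommGroup X] [NormedSpace ℝ X] [CompleteSpace X]
  {T : ℝ → X →L[ℝ] X} {C t : ℝ}

theorem tendsto_integral_clm_apply_sub_steklov
    (hTc : ∀ x, ContinuousOn (fun r => T r x) (Ici 0)) (hTC : ∀ r ∈ Ici (0 : ℝ), ‖T r‖ ≤ C)
    {ψ : ℝ → X} (ht : 0 < t) (hψ : IntervalIntegrable ψ volume 0 t) :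
    Tendsto (fun h => ∫ s in 0..t - h, T (t - s) (steklov ψ h s)) (𝓝[>] 0)
      (𝓝 (∫ s in 0..t, T (t - s) (ψ s))) := by
  have hΨ := intervalIntegrable_clm_apply_sub hTc hTC ht.le hψ
  have htail : Tendsto (fun h => ∫ s in 0..t - h, T (t - s) (ψ s)) (𝓝[>] 0)
      (𝓝 (∫ s in 0..t, T (t - s) (ψ s))) := by
    refine ((intervalIntegral.continuousOn_primitive_interval' hΨ left_mem_uIcc) t
      right_mem_uIcc).tendsto.comp (tendsto_nhdsWithin_iff.2 ⟨?_, ?_⟩)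
    · simpa using ((continuous_sub_left t).tendsto 0).mono_left nhdsWithin_le_nhds
    · filter_upwards [Ioo_mem_nhdsGT ht] with h hh
      exact mem_uIcc.2 (Or.inl ⟨by linarith [hh.2], by linarith [hh.1]⟩)
  have hsmall : Tendsto (fun h => (∫ s in 0..t - h, T (t - s) (steklov ψ h s))
      - ∫ s in 0..t - h, T (t - s) (ψ s)) (𝓝[>] 0) (𝓝 0) := by
    refine squeeze_zero_norm' ?_
      (by simpa using (tendsto_integral_norm_steklov_sub ht hψ).const_mul C)
    filter_upwards [Ioo_mem_nhdsGT ht] with h hh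
    have hth : 0 ≤ t - h := by linarith [hh.2]
    have hsub : uIcc 0 (t - h) ⊆ uIcc 0 t :=
      uIcc_subset_uIcc left_mem_uIcc (mem_uIcc.2 (Or.inl ⟨hth, by linarith [hh.1]⟩))
    have hsteklov := continuousOn_steklov hψ hh.1.le
    rw [← intervalIntegral.integral_sub ((continuousOn_clm_apply_sub hTc hTC hsteklov
      fun s hs => show s ≤ t by linarith [hs.2, hh.1]).intervalIntegrable_of_Icc hth)
      (hΨ.mono_set hsub), ← intervalIntegral.integral_const_mul]
    refine intervalIntegral.norm_integral_le_of_norm_le hth (Eventually.of_forall fun s hs => ?_)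
      (((hsteklov.intervalIntegrable_of_Icc hth).sub (hψ.mono_set hsub)).norm.const_mul C)
    rw [← map_sub]
    exact (T (t - s)).le_of_opNorm_le (hTC _ (show 0 ≤ t - s by linarith [hs.2, hh.1])) _
  simpa using hsmall.add htail

theorem integral_clm_apply_sub_steklov_eq (K A : E →L[ℝ] X)
    (hTc : ∀ x, ContinuousOn (fun r => T r x) (Ici 0)) (hTC : ∀ r ∈ Ici (0 : ℝ), ‖T r‖ ≤ C)
    (hTK : ∀ w, ∀ r > 0, HasDerivAt (fun r => T r (K w)) (-T r (A w)) r)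
    {u : ℝ → E} {u' U : ℝ → X} {x₀ : X}
    (hu : IntervalIntegrable u volume 0 t) (hu' : IntervalIntegrable u' volume 0 t)
    (hU : ∀ s ∈ Icc 0 t, U s = x₀ + ∫ r in 0..s, u' r)
    (hUu : ∀ᵐ s ∂volume.restrict (Ioc 0 t), U s = K (u s)) {h : ℝ} (hh : 0 < h) (hht : h < t) :
    ∫ s in 0..t - h, T (t - s) (steklov (fun r => A (u r) + u' r) h s)
      = T h (steklov U h (t - h)) - T t (steklov U h 0) := by
  have hUc := continuousOn_of_forall_eq_add_integral (hh.trans hht).le hu' hU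
  have hAu : IntervalIntegrable (fun r => A (u r)) volume 0 t :=
    ⟨A.integrable_comp hu.1, A.integrable_comp hu.2⟩
  have hUu' := (ae_restrict_iff' measurableSet_Ioc).1 hUu
  have hKW : ∀ s ∈ Icc 0 (t - h), K (steklov u h s) = steklov U h s := fun s hs => by
    rw [K.map_steklov (hu.mono_add_of_mem_Icc hh.le hs), steklov, steklov]
    congr 1
    refine intervalIntegral.integral_congr_ae ?_
    filter_upwards [hUu'] with r hr hrs
    rw [uIoc_of_le (by linarith)] at hrs
    exact (hr ⟨by linarith [hs.1, hrs.1], by linarith [hs.2, hrs.2]⟩).symm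
  have hderiv : ∀ s ∈ Ioo 0 (t - h), HasDerivAt (fun s => T (t - s) (steklov U h s))
      (T (t - s) (steklov (fun r => A (u r) + u' r) h s)) s := fun s hs => by
    have hts : 0 < t - s := by linarith [hs.2]
    have hs' : s ∈ Icc 0 (t - h) := Ioo_subset_Icc_self hs
    have hW : HasDerivAt (steklov U h) (steklov u' h s) s := by
      convert hasDerivAt_steklov hUc hh.le hs using 1
      rw [steklov_eq_primitive_sub hu' hh.le hs'.1 (by linarith [hs'.2]),
        hU s ⟨hs'.1, by linarith [hs'.2]⟩, hU (s + h) ⟨by linarith [hs'.1], by linarith [hs'.2]⟩,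
        add_sub_add_left_eq_sub]
    have hgen : HasDerivAt (fun r => T (t - r) (steklov U h s))
        (T (t - s) (A (steklov u h s))) s := by
      rw [← hKW s hs']
      simpa [Function.comp_def] using (hTK _ _ hts).scomp s ((hasDerivAt_id s).const_sub t)
    have hprod := hW.clm_apply_of_norm_le
      (((hTc _).continuousAt (Ici_mem_nhds hts)).comp (continuous_sub_left t).continuousAt)
      ((eventually_lt_nhds (show s < t by linarith)).mono fun r hr => hTC _ (sub_nonneg.2 hr.le))
      hgen
    rwa [← map_add, A.map_steklov (hu.mono_add_of_mem_Icc hh.le hs'), add_comm,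
      ← steklov_add (hAu.mono_add_of_mem_Icc hh.le hs') (hu'.mono_add_of_mem_Icc hh.le hs')]
      at hprod
  have hsum : IntervalIntegrable (fun r => A (u r) + u' r) volume 0 t := hAu.add hu'
  have hIcc : Icc 0 (t - h) ⊆ Iic t := fun s hs => show s ≤ t by linarith [hs.2]
  rw [intervalIntegral.integral_eq_sub_of_hasDerivAt_of_le (by linarith)
    (continuousOn_clm_apply_sub hTc hTC
      (continuousOn_steklov (hUc.intervalIntegrable_of_Icc (by linarith)) hh.le) hIcc) hderiv
    ((continuousOn_clm_apply_sub hTc hTC (continuousOn_steklov hsum hh.le)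
      hIcc).intervalIntegrable_of_Icc (by linarith)), sub_sub_cancel, sub_zero]

theorem variation_of_constants (K A : E →L[ℝ] X) (hT0 : ∀ x, T 0 x = x)
    (hTc : ∀ x, ContinuousOn (fun r => T r x) (Ici 0)) (hTC : ∀ r ∈ Ici (0 : ℝ), ‖T r‖ ≤ C)
    (hTK : ∀ w, ∀ r > 0, HasDerivAt (fun r => T r (K w)) (-T r (A w)) r)
    {u : ℝ → E} {u' U : ℝ → X} {x₀ : X} (ht : 0 < t)
    (hu : IntervalIntegrable u volume 0 t) (hu' : IntervalIntegrable u' volume 0 t)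
    (hU : ∀ s ∈ Icc 0 t, U s = x₀ + ∫ r in 0..s, u' r)
    (hUu : ∀ᵐ s ∂volume.restrict (Ioc 0 t), U s = K (u s)) :
    U t = (∫ s in 0..t, T (t - s) (A (u s) + u' s)) + T t x₀ := by
  have hUc := continuousOn_of_forall_eq_add_integral ht.le hu' hU
  have hψ : IntervalIntegrable (fun r => A (u r) + u' r) volume 0 t :=
    IntervalIntegrable.add ⟨A.integrable_comp hu.1, A.integrable_comp hu.2⟩ hu'
  have hfinal : Tendsto (fun h => T h (steklov U h (t - h))) (𝓝[>] 0) (𝓝 (U t)) := by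
    rw [← hT0 (U t)]
    refine (continuousOn_clm_apply_of_norm_le hTc hTC (0, U t) ⟨self_mem_Ici, trivial⟩).tendsto.comp
      (tendsto_nhdsWithin_iff.2 ⟨(tendsto_id.mono_left nhdsWithin_le_nhds).prodMk_nhds
        (tendsto_steklov_left ht hUc), ?_⟩)
    filter_upwards [self_mem_nhdsWithin] with h hh
    exact ⟨show (0 : ℝ) ≤ h from le_of_lt hh, trivial⟩
  have hinitial : Tendsto (fun h => T t (steklov U h 0)) (𝓝[>] 0) (𝓝 (T t x₀)) := by
    have := ((T t).continuous.tendsto _).comp (tendsto_steklov_right ht hUc)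
    rwa [hU 0 (left_mem_Icc.2 ht.le), intervalIntegral.integral_same, add_zero] at this
  have hFTC : ∀ᶠ h in 𝓝[>] 0, ∫ s in 0..t - h, T (t - s) (steklov (fun r => A (u r) + u' r) h s)
      = T h (steklov U h (t - h)) - T t (steklov U h 0) := by
    filter_upwards [Ioo_mem_nhdsGT ht] with h hh
    exact integral_clm_apply_sub_steklov_eq K A hTc hTC hTK hu hu' hU hUu hh.1 hh.2
  rw [tendsto_nhds_unique ((tendsto_integral_clm_apply_sub_steklov hTc hTC ht hψ).congr' hFTC)
    (hfinal.sub hinitial), sub_add_cancel]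

end VariationOfConstants

set_option linter.unusedSectionVars false

theorem MeasureTheory.MemLp.intervalIntegrable_of_mem_Ioc {F : Type*} [NormedAddCommGroup F]
    {g : ℝ → F} {p : ℝ≥0∞} {a b c : ℝ} (hg : MemLp g p (volume.restrict (Ioc a b))) (hp : 1 ≤ p)
    (hc : c ∈ Ioc a b) : IntervalIntegrable g volume a c :=
  (intervalIntegrable_iff_integrableOn_Ioc_of_le hc.1.le).2
    (IntegrableOn.mono_set (hg.integrable hp) (Ioc_subset_Ioc_right hc.2))

/-- `dualEmb J`, bundled as a conjugate-linear map (the two agree definitionally). -/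
def dualEmbCLM (J : V →L[ℂ] H) : H →L⋆[ℂ] (V →L[ℂ] ℂ) :=
  ((ContinuousLinearMap.compL ℂ V H ℂ).flip J).comp (innerSL ℂ)

namespace IsSemigroupVdual

variable {J : V →L[ℂ] H} {B : V →L⋆[ℂ] V →L[ℂ] ℂ}
  {T : ℝ → (V →L[ℂ] ℂ) →L[ℂ] (V →L[ℂ] ℂ)} {t : ℝ}

theorem intervalIntegrable_apply_sub (hT : IsSemigroupVdual J B T) (ht : 0 ≤ t)
    {ψ : ℝ → V →L[ℂ] ℂ} (hψ : IntervalIntegrable ψ volume 0 t) :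
    IntervalIntegrable (fun s => T (t - s) (ψ s)) volume 0 t := by
  obtain ⟨-, -, hTc, ⟨C, hC⟩, -⟩ := hT
  exact intervalIntegrable_clm_apply_sub (T := fun r => (T r).restrictScalars ℝ) hTc
    (fun r hr => (ContinuousLinearMap.norm_restrictScalars _).trans_le (hC r hr)) ht hψ

theorem variation_of_constants (hT : IsSemigroupVdual J B T) (ht : 0 < t) {u : ℝ → V}
    {u' U : ℝ → V →L[ℂ] ℂ} {x₀ : V →L[ℂ] ℂ}
    (hu : IntervalIntegrable u volume 0 t) (hu' : IntervalIntegrable u' volume 0 t)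
    (hU : ∀ s ∈ Icc 0 t, U s = x₀ + ∫ r in 0..s, u' r)
    (hUu : ∀ᵐ s ∂volume.restrict (Ioc 0 t), U s = dualEmb J (J (u s))) :
    U t = (∫ s in 0..t, T (t - s) (B (u s) + u' s)) + T t x₀ := by
  obtain ⟨hT0, -, hTc, ⟨C, hC⟩, hTK⟩ := hT
  set K := (dualEmbCLM J).comp J
  exact _root_.variation_of_constants (T := fun r => (T r).restrictScalars ℝ)
    ((K : V →+ (V →L[ℂ] ℂ)).toRealLinearMap K.continuous)
    ((B : V →+ (V →L[ℂ] ℂ)).toRealLinearMap B.continuous) (fun x => by simp [hT0]) hTc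
    (fun r hr => (ContinuousLinearMap.norm_restrictScalars _).trans_le (hC r hr))
    (fun w r hr => (hTK w r hr.le).hasDerivAt (Ici_mem_nhds hr)) ht hu hu' hU hUu

end IsSemigroupVdual

theorem acquistapace_terreni_representation_general
    (J : V →L[ℂ] H)
    (τ : ℝ)
    (a : ℝ → V →L⋆[ℂ] V →L[ℂ] ℂ)
    -- the semigroups `e^{-s𝒜(t)}` on `V'`
    (TV : ℝ → ℝ → (V →L[ℂ] ℂ) →L[ℂ] (V →L[ℂ] ℂ))
    (hTV : ∀ t ∈ Icc (0:ℝ) τ, IsSemigroupVdual J (a t) (TV t))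
    -- the data `f ∈ C_c^∞(0,τ;H)` and `u₀ ∈ H`
    (f : ℝ → H) (hf : ContDiff ℝ (⊤ : ℕ∞) f)
    (u₀ : H)
    -- the Lions solution: `u ∈ L₂(0,τ;V)`, derivative `u' ∈ L₂(0,τ;V')`, continuous
    -- representative `U ∈ W¹₂(0,τ;V')`, `U(0) = u₀`
    (u : ℝ → V) (u' : ℝ → V →L[ℂ] ℂ) (U : ℝ → V →L[ℂ] ℂ)
    (hu : MemLp u 2 (volume.restrict (Ioc 0 τ)))
    (hu' : MemLp u' 2 (volume.restrict (Ioc 0 τ)))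
    (hU : ∀ t ∈ Icc (0:ℝ) τ, U t = dualEmb J u₀ + ∫ s in (0:ℝ)..t, u' s)
    (hUu : ∀ᵐ t ∂(volume.restrict (Ioc 0 τ)), U t = dualEmb J (J (u t)))
    (heq : ∀ᵐ t ∂(volume.restrict (Ioc 0 τ)),
      u' t + (a t (u t) : V →L[ℂ] ℂ) = dualEmb J (f t)) :
    -- the representation formula, a.e. on `(0,τ)`, in `V'`:
    ∀ᵐ t ∂(volume.restrict (Ioc 0 τ)),
      U t = (∫ s in (0:ℝ)..t, TV t (t - s) ((a t (u s) : V →L[ℂ] ℂ) - a s (u s)))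
        + (∫ s in (0:ℝ)..t, TV t (t - s) (dualEmb J (f s)))
        + TV t t (dualEmb J u₀) := by
  refine ae_restrict_of_forall_mem measurableSet_Ioc fun t ht => ?_
  have hsub : Ioc 0 t ⊆ Ioc 0 τ := Ioc_subset_Ioc_right ht.2
  have hTVt := hTV t ⟨ht.1.le, ht.2⟩
  have hu_t := hu.intervalIntegrable_of_mem_Ioc one_le_two ht
  have hu'_t := hu'.intervalIntegrable_of_mem_Ioc one_le_two ht
  have hsolution := hTVt.intervalIntegrable_apply_sub ht.1.le
    (IntervalIntegrable.add ⟨(a t).integrable_comp hu_t.1, (a t).integrable_comp hu_t.2⟩ hu'_t)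
  have hforcing : IntervalIntegrable (fun s => TV t (t - s) (dualEmb J (f s))) volume 0 t :=
    hTVt.intervalIntegrable_apply_sub ht.1.le
    (((dualEmbCLM J).continuous.comp hf.continuous).intervalIntegrable 0 t)
  have hrewrite : ∫ s in 0..t, TV t (t - s) ((a t (u s) : V →L[ℂ] ℂ) - a s (u s))
      = (∫ s in 0..t, TV t (t - s) (a t (u s) + u' s))
        - ∫ s in 0..t, TV t (t - s) (dualEmb J (f s)) := by
    rw [← intervalIntegral.integral_sub hsolution hforcing]
    refine intervalIntegral.integral_congr_ae ?_
    filter_upwards [(ae_restrict_iff' measurableSet_Ioc).1 heq] with s hs hst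
    rw [uIoc_of_le ht.1.le] at hst
    rw [← map_sub, ← hs (hsub hst)]
    abel_nf
  rw [hrewrite, hTVt.variation_of_constants ht.1 hu_t hu'_t
    (fun s hs => hU s ⟨hs.1, hs.2.trans ht.2⟩) (ae_restrict_of_ae_restrict_of_subset hsub hUu)]
  abel

/-- **The Acquistapace–Terreni representation formula for the Lions solution.** -/
theorem acquistapace_terreni_representation
    (J : V →L[ℂ] H) (hJinj : Function.Injective J) (hJdense : DenseRange J)
    (τ : ℝ) (hτ : 0 < τ)
    (a : ℝ → V →L⋆[ℂ] V →L[ℂ] ℂ)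
    (M : ℝ) (hM : 0 < M)
    (hbdd : ∀ t ∈ Icc (0:ℝ) τ, ∀ u v : V, ‖a t u v‖ ≤ M * ‖u‖ * ‖v‖)
    (α : ℝ) (hα : 0 < α)
    (hcoer : ∀ t ∈ Icc (0:ℝ) τ, ∀ u : V, α * ‖u‖ ^ 2 ≤ (a t u u).re)
    -- the semigroups `e^{-s𝒜(t)}` on `V'`
    (TV : ℝ → ℝ → (V →L[ℂ] ℂ) →L[ℂ] (V →L[ℂ] ℂ))
    (hTV : ∀ t ∈ Icc (0:ℝ) τ, IsSemigroupVdual J (a t) (TV t))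
    -- the data `f ∈ C_c^∞(0,τ;H)` and `u₀ ∈ H`
    (f : ℝ → H) (hf : ContDiff ℝ (⊤ : ℕ∞) f) (hfsupp : tsupport f ⊆ Ioo 0 τ)
    (u₀ : H)
    -- the Lions solution: `u ∈ L₂(0,τ;V)`, derivative `u' ∈ L₂(0,τ;V')`, continuous
    -- representative `U ∈ W¹₂(0,τ;V')`, `U(0) = u₀`
    (u : ℝ → V) (u' : ℝ → V →L[ℂ] ℂ) (U : ℝ → V →L[ℂ] ℂ)
    (hu : MemLp u 2 (volume.restrict (Ioc 0 τ)))
    (hu' : MemLp u' 2 (volume.restrict (Ioc 0 τ)))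
    (hU : ∀ t ∈ Icc (0:ℝ) τ, U t = dualEmb J u₀ + ∫ s in (0:ℝ)..t, u' s)
    (hUu : ∀ᵐ t ∂(volume.restrict (Ioc 0 τ)), U t = dualEmb J (J (u t)))
    (heq : ∀ᵐ t ∂(volume.restrict (Ioc 0 τ)),
      u' t + (a t (u t) : V →L[ℂ] ℂ) = dualEmb J (f t)) :
    -- the representation formula, a.e. on `(0,τ)`, in `V'`:
    ∀ᵐ t ∂(volume.restrict (Ioc 0 τ)),
      U t = (∫ s in (0:ℝ)..t, TV t (t - s) ((a t (u s) : V →L[ℂ] ℂ) - a s (u s)))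
        + (∫ s in (0:ℝ)..t, TV t (t - s) (dualEmb J (f s)))
        + TV t t (dualEmb J u₀) :=
  acquistapace_terreni_representation_general J τ a TV hTV f hf u₀ u u' U hu hu' hU hUu heq
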